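/- Let φ_b be an LTLf formula over P, let V = {U₁, …, Uₙ} ⊆ P, and let N be an NFA over 2^P with L(N) = { t | t ⊨ ¬φ_b }. Then for every finite trace t over 2^P: t is accepted by the complement of D(N_{∃U₁,…,Uₙ}) if and only if every trace t' with t' ~_{-V} t satisfies t' ⊨ φ_b. -/

import Mathlib

/-! ## Automata -/

/-- A deterministic finite automaton (DFA) over alphabet `α` with states `S`:
a designated initial state, a total transition function, and a set of accepting states. -/
structure DFA' (α : Type*) (S : Type*) where
  start : S
  step : S → α → S
  accept : Set S

namespace DFA'

variable {α S : Type*}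

/-- The state reached from `s` after reading the word `w`. -/
def evalFrom (M : DFA' α S) (s : S) (w : List α) : S :=
  w.foldl M.step s

/-- A DFA accepts a finite word iff its unique run from the initial state ends in an
accepting state. -/
def Accepts (M : DFA' α S) (w : List α) : Prop :=
  M.evalFrom M.start w ∈ M.accept

/-- The complement of a DFA, obtained by complementing its set of accepting states. -/
def compl (M : DFA' α S) : DFA' α S :=
  { M with accept := M.acceptᶜ }

/-- The synchronous product of two DFAs over the same alphabet. -/
def prod {S₁ S₂ : Type*} (M₁ : DFA' α S₁) (M₂ : DFA' α S₂) : DFA' α (S₁ × S₂) where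
  start := (M₁.start, M₂.start)
  step := fun p a => (M₁.step p.1 a, M₂.step p.2 a)
  accept := {p | p.1 ∈ M₁.accept ∧ p.2 ∈ M₂.accept}

end DFA'

/-- A nondeterministic finite automaton (NFA) over alphabet `α` with states `S`:
a designated initial state, a transition function into sets of states, and a set of
accepting states. -/
structure NFA' (α : Type*) (S : Type*) where
  start : S
  step : S → α → Set S
  accept : Set S

namespace NFA'

variable {α S : Type*}

/-- One step of the subset construction. -/
def stepSet (M : NFA' α S) (T : Set S) (a : α) : Set S :=
  ⋃ s ∈ T, M.step s a

/-- The set of states reachable from a state in `T` after reading the word `w`. -/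
def evalFrom (M : NFA' α S) (T : Set S) (w : List α) : Set S :=
  w.foldl M.stepSet T

/-- An NFA accepts a finite word iff some run from the initial state on that word
ends in an accepting state. -/
def Accepts (M : NFA' α S) (w : List α) : Prop :=
  ∃ s ∈ M.evalFrom {M.start} w, s ∈ M.accept

/-- The determinization `D(M)` of an NFA `M` by the subset construction. -/
def det (M : NFA' α S) : DFA' α (Set S) where
  start := {M.start}
  step := M.stepSet
  accept := {T | ∃ s ∈ T, s ∈ M.accept}

end NFA'

/-- A DFA viewed as an NFA. -/
def DFA'.toNFA' {α S : Type*} (M : DFA' α S) : NFA' α S where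
  start := M.start
  step := fun s a => {M.step s a}
  accept := M.accept

/-! ## Traces -/

/-- Two finite traces over `2^P` are equivalent up to the variables in `V`
(written `t' ~_{-V} t` in the paper): they have the same length and at every position
they contain exactly the same variables of `P \ V`. -/
def EquivUpTo {P : Type*} (V : Set P) (t t' : List (Set P)) : Prop :=
  List.Forall₂ (fun a b => a \ V = b \ V) t t'

/-- The existentially abstracted NFA `N_{∃V}`: same states, initial and accepting states,
and `δ'(s, a) = { s' | ∃ a' with a ~_{-V} a' and s' ∈ δ(s, a') }`. -/
def NFA'.abstract {P S : Type*} (M : NFA' (Set P) S) (V : Set P) : NFA' (Set P) S :=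
  { M with step := fun s a => {s' | ∃ a' : Set P, a \ V = a' \ V ∧ s' ∈ M.step s a'} }

/-- The belief-state DFA `G^rel_A` of a DFA `A` over `2^{X ∪ Y}` with unreliable input
variables `Xunr ⊆ X`: states are sets of states of `A`, the initial state is `{s₀}`,
`∂(B, a) = { s' | ∃ s ∈ B, ∃ a' with a ~_{-Xunr} a' and δ(s, a') = s' }`, and a belief
state `B` is accepting iff `B ⊆ F`. -/
def DFA'.belief {X Y S : Type*} (A : DFA' (Set (X ⊕ Y)) S) (Xunr : Set X) :
    DFA' (Set (X ⊕ Y)) (Set S) where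
  start := {A.start}
  step := fun B a => {s' | ∃ s ∈ B, ∃ a' : Set (X ⊕ Y),
    a \ (Sum.inl '' Xunr) = a' \ (Sum.inl '' Xunr) ∧ A.step s a' = s'}
  accept := {B | B ⊆ A.accept}

/-! ## LTLf and QLTLf -/

/-- LTLf formulas over propositional variables `P`. -/
inductive LTLf (P : Type*) where
  | atom : P → LTLf P
  | not : LTLf P → LTLf P
  | and : LTLf P → LTLf P → LTLf P
  | next : LTLf P → LTLf P
  | until_ : LTLf P → LTLf P → LTLf P

/-- Satisfaction `t, i ⊨ φ` of an LTLf formula at position `i` (0-indexed) of a finite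
trace `t`. -/
def LTLf.Sat {P : Type*} (t : List (Set P)) : LTLf P → ℕ → Prop
  | .atom a, i => ∃ h : i < t.length, a ∈ t.get ⟨i, h⟩
  | .not φ, i => ¬ LTLf.Sat t φ i
  | .and φ ψ, i => LTLf.Sat t φ i ∧ LTLf.Sat t ψ i
  | .next φ, i => i + 1 < t.length ∧ LTLf.Sat t φ (i + 1)
  | .until_ φ ψ, i => ∃ j, i ≤ j ∧ j < t.length ∧ LTLf.Sat t ψ j ∧
      ∀ k, i ≤ k → k < j → LTLf.Sat t φ k

/-- QLTLf formulas over propositional variables `P`: LTLf extended with second-order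
existential quantification over propositional variables. -/
inductive QLTLf (P : Type*) where
  | atom : P → QLTLf P
  | not : QLTLf P → QLTLf P
  | and : QLTLf P → QLTLf P → QLTLf P
  | next : QLTLf P → QLTLf P
  | until_ : QLTLf P → QLTLf P → QLTLf P
  | ex : P → QLTLf P → QLTLf P

/-- Satisfaction `t, i ⊨ φ` of a QLTLf formula at position `i` (0-indexed) of a finite
trace `t`; `t, i ⊨ ∃X. φ` iff there is a trace `t'` with `t' ~_{-{X}} t` and `t', i ⊨ φ`. -/
def QLTLf.Sat {P : Type*} : List (Set P) → QLTLf P → ℕ → Prop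
  | t, .atom a, i => ∃ h : i < t.length, a ∈ t.get ⟨i, h⟩
  | t, .not φ, i => ¬ QLTLf.Sat t φ i
  | t, .and φ ψ, i => QLTLf.Sat t φ i ∧ QLTLf.Sat t ψ i
  | t, .next φ, i => i + 1 < t.length ∧ QLTLf.Sat t φ (i + 1)
  | t, .until_ φ ψ, i => ∃ j, i ≤ j ∧ j < t.length ∧ QLTLf.Sat t ψ j ∧
      ∀ k, i ≤ k → k < j → QLTLf.Sat t φ k
  | t, .ex p φ, i => ∃ t', EquivUpTo {p} t' t ∧ QLTLf.Sat t' φ i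

/-- Universal second-order quantification `∀X. φ := ¬∃X. ¬φ`. -/
def QLTLf.all {P : Type*} (p : P) (φ : QLTLf P) : QLTLf P :=
  .not (.ex p (.not φ))

/-- The embedding of (quantifier-free) LTLf formulas into QLTLf. -/
def LTLf.toQ {P : Type*} : LTLf P → QLTLf P
  | .atom a => .atom a
  | .not φ => .not φ.toQ
  | .and φ ψ => .and φ.toQ ψ.toQ
  | .next φ => .next φ.toQ
  | .until_ φ ψ => .until_ φ.toQ ψ.toQ

/-! ## Strategies, plays and synthesis -/

section Synthesis

variable {X Y : Type*}

/-- The letter `X ∪ Y ∈ 2^{X ∪ Y}` combining an input letter `A ∈ 2^X` and an output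
letter `B ∈ 2^Y`. -/
def combine (A : Set X) (B : Set Y) : Set (X ⊕ Y) :=
  Sum.inl '' A ∪ Sum.inr '' B

/-- The finite trace `((X₀ ∪ Y₀), …, (X_k ∪ Y_k))` with `Y_i = σ(X₀, …, X_{i-1})`
produced by the strategy `σ` against the infinite input sequence `env`. -/
def playTrace (σ : List (Set X) → Set Y) (env : ℕ → Set X) (k : ℕ) :
    List (Set (X ⊕ Y)) :=
  (List.range (k + 1)).map fun i => combine (env i) (σ ((List.range i).map env))

/-- The strategy `σ` is winning for the agent in the DFA game on `G`: for every infinite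
input sequence there is a `k` such that the run of `G` on the induced finite trace ends
in an accepting state. -/
def Winning {S : Type*} (G : DFA' (Set (X ⊕ Y)) S) (σ : List (Set X) → Set Y) : Prop :=
  ∀ env : ℕ → Set X, ∃ k : ℕ, G.Accepts (playTrace σ env k)

/-- The strategy `σ` realizes the LTLf formula `φ` in standard LTLf synthesis. -/
def Realizes (σ : List (Set X) → Set Y) (φ : LTLf (X ⊕ Y)) : Prop :=
  ∀ env : ℕ → Set X, ∃ k : ℕ, LTLf.Sat (playTrace σ env k) φ 0

/-- The strategy `σ` realizes QLTLf synthesis for the QLTLf formula `ψ`. -/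
def RealizesQ (σ : List (Set X) → Set Y) (ψ : QLTLf (X ⊕ Y)) : Prop :=
  ∀ env : ℕ → Set X, ∃ k : ℕ, QLTLf.Sat (playTrace σ env k) ψ 0

/-- The strategy `σ` solves LTLf synthesis under unreliable input for main specification
`φm`, backup specification `φb`, and unreliable input variables `Xunr`: for every
infinite input sequence there is a `k` such that the induced finite trace `t` satisfies
`φm` and every trace `t'` with `t' ~_{-Xunr} t` satisfies `φb`. -/
def SolvesUnreliable (σ : List (Set X) → Set Y) (φm φb : LTLf (X ⊕ Y))
    (Xunr : Set X) : Prop :=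
  ∀ env : ℕ → Set X, ∃ k : ℕ,
    LTLf.Sat (playTrace σ env k) φm 0 ∧
    ∀ t', EquivUpTo (Sum.inl '' Xunr) t' (playTrace σ env k) → LTLf.Sat t' φb 0

end Synthesis

/-! A run of `N_{∃V}` on `t` reads, letter by letter, some `a' ~_{-V} a` in place of each
letter `a` of `t`, so it is exactly a run of `N` on some trace `t' ~_{-V} t`. Hence the
subset automaton `D(N_{∃V})` accepts `t` iff some `t' ~_{-V} t` violates `φb`. -/

namespace NFA'

variable {α S : Type*}

lemma evalFrom_cons (M : NFA' α S) (T : Set S) (a : α) (w : List α) :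
    M.evalFrom T (a :: w) = M.evalFrom (M.stepSet T a) w :=
  rfl

lemma stepSet_iUnion {ι : Sort*} (M : NFA' α S) (T : ι → Set S) (a : α) :
    M.stepSet (⋃ i, T i) a = ⋃ i, M.stepSet (T i) a := by
  simp only [stepSet, Set.biUnion_iUnion]

lemma evalFrom_iUnion {ι : Sort*} (M : NFA' α S) (T : ι → Set S) (w : List α) :
    M.evalFrom (⋃ i, T i) w = ⋃ i, M.evalFrom (T i) w := by
  induction w generalizing T with
  | nil => rfl
  | cons a w ih => rw [evalFrom_cons, stepSet_iUnion, ih]; rfl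

lemma det_accepts_iff (M : NFA' α S) (w : List α) : M.det.Accepts w ↔ M.Accepts w :=
  Iff.rfl

section Abstract

variable {P : Type*}

lemma abstract_stepSet (M : NFA' (Set P) S) (V : Set P) (T : Set S) (a : Set P) :
    (M.abstract V).stepSet T a = ⋃ a' : {a' : Set P // a \ V = a' \ V}, M.stepSet T a' := by
  ext s
  simp only [stepSet, abstract, Set.mem_iUnion, Set.mem_ofPred_eq, Subtype.exists]
  tauto

lemma mem_abstract_evalFrom (M : NFA' (Set P) S) (V : Set P) (T : Set S)
    (t : List (Set P)) (s : S) :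
    s ∈ (M.abstract V).evalFrom T t ↔ ∃ t', EquivUpTo V t' t ∧ s ∈ M.evalFrom T t' := by
  induction t generalizing T with
  | nil => simp [EquivUpTo, evalFrom]
  | cons a w ih =>
    simp only [evalFrom_cons, ih, abstract_stepSet, evalFrom_iUnion, Set.mem_iUnion,
      EquivUpTo, List.forall₂_cons_right_iff, Subtype.exists]
    constructor
    · rintro ⟨a', ha', w', hw', hs⟩
      exact ⟨a' :: w', ⟨a', w', ha'.symm, hw', rfl⟩, hs⟩
    · rintro ⟨_, ⟨a', w', ha', hw', rfl⟩, hs⟩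
      exact ⟨a', ha'.symm, w', hw', hs⟩

lemma abstract_accepts_iff (M : NFA' (Set P) S) (V : Set P) (t : List (Set P)) :
    (M.abstract V).Accepts t ↔ ∃ t', EquivUpTo V t' t ∧ M.Accepts t' := by
  simp only [Accepts, mem_abstract_evalFrom]
  constructor
  · rintro ⟨s, ⟨t', ht', hs⟩, hacc⟩
    exact ⟨t', ht', s, hs, hacc⟩
  · rintro ⟨t', ht', s, hs, hacc⟩
    exact ⟨s, ⟨t', ht', hs⟩, hacc⟩

end Abstract

end NFA'

lemma DFA'.compl_accepts_iff {α S : Type*} (M : DFA' α S) (w : List α) :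
    M.compl.Accepts w ↔ ¬ M.Accepts w :=
  Iff.rfl

lemma EquivUpTo.ne_nil {P : Type*} {V : Set P} {t t' : List (Set P)}
    (h : EquivUpTo V t' t) (ht : t ≠ []) : t' ≠ [] := by
  rintro rfl
  exact ht (List.forall₂_nil_left_iff.mp h)

/-- Let `φb` be an LTLf formula over `P`, `V = {U₁, …, Uₙ} ⊆ P`, and `N`
an NFA over `2^P` with `L(N) = { t | t ⊨ ¬φb }`. Then for every finite trace `t`:
`t` is accepted by the complement of `D(N_{∃U₁,…,Uₙ})` iff every trace `t'` with
`t' ~_{-V} t` satisfies `t' ⊨ φb`. -/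
theorem compl_det_abstract_backup_iff {P S : Type*}
    (φb : LTLf P) (V : Finset P) (N : NFA' (Set P) S)
    (hN : ∀ t : List (Set P), t ≠ [] → (N.Accepts t ↔ LTLf.Sat t (.not φb) 0))
    (t : List (Set P)) (ht : t ≠ []) :
    ((N.abstract ↑V).det.compl).Accepts t ↔
      ∀ t', EquivUpTo (↑V) t' t → LTLf.Sat t' φb 0 := by
  rw [DFA'.compl_accepts_iff, NFA'.det_accepts_iff, NFA'.abstract_accepts_iff]
  push Not
  refine forall₂_congr fun t' ht' => ?_
  rw [hN t' (ht'.ne_nil ht)]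
  exact not_not
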